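/- arXiv:1606.03325 — 3 statements merged into one kernel-verified Lean document; each statement's English description precedes it below -/
import Mathlib

section
/- Let a be a symmetric d×d real matrix and let π, ρ ∈ Δ^d be two points of the standard simplex. Define τ^ρ_{ij} = (ρ − e_i)ᵀ a (ρ − e_j) and the excess growth γ*_π = (1/2)(Σ_i π_i a_{ii} − Σ_{i,j} π_i π_j a_{ij}). Then γ*_π = (1/2)(Σ_i π_i τ^ρ_{ii} − Σ_{i,j} π_i π_j τ^ρ_{ij}) (numéraire invariance of the excess growth rate). -/
/-!
Expanding the bilinear form, `τ^ρ_ij = a_ij + u_i + v_j` with `u_i = ρᵀaρ - (aρ)_i` and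
`v_j = -(ρᵀa)_j`. The excess growth is blind to such row and column shifts as soon as the weights
sum to one: `Σ_i π_i u_i - Σ_{i,j} π_i π_j u_i = 0`, and likewise for `v`.
-/

open Finset Matrix

lemma sum_sum_sub_ite_mul_mul_sub_ite {ι R : Type*} [Fintype ι] [DecidableEq ι] [CommRing R]
    (a : Matrix ι ι R) (ρ : ι → R) (i j : ι) :
    ∑ k, ∑ l, (ρ k - if i = k then 1 else 0) * a k l * (ρ l - if j = l then 1 else 0)
      = a i j + (ρ ⬝ᵥ a *ᵥ ρ - (a *ᵥ ρ) i) - (ρ ᵥ* a) j := by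
  simp only [sub_mul, mul_sub, sum_sub_distrib, ite_mul, mul_ite, one_mul, zero_mul, mul_one,
    mul_zero, sum_ite_eq, sum_ite_irrel, sum_const_zero, mem_univ, if_true, dotProduct, mulVec,
    vecMul, mul_sum, mul_assoc]
  ring

noncomputable def excessGrowth {ι : Type*} [Fintype ι] (π : ι → ℝ) (x : ι → ι → ℝ) : ℝ :=
  (1 / 2) * (∑ i, π i * x i i - ∑ i, ∑ j, π i * π j * x i j)

lemma excessGrowth_add_row_add_col {ι : Type*} [Fintype ι] {π : ι → ℝ} (hπ : ∑ i, π i = 1)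
    (x : ι → ι → ℝ) (u v : ι → ℝ) :
    excessGrowth π (fun i j => x i j + u i + v j) = excessGrowth π x := by
  have hrow : ∑ i, ∑ j, π i * π j * u i = ∑ i, π i * u i := by
    simp only [mul_right_comm (π _) (π _), ← mul_sum, hπ, mul_one]
  have hcol : ∑ i, ∑ j, π i * π j * v j = ∑ j, π j * v j := by
    simp only [mul_assoc, ← mul_sum, ← sum_mul, hπ, one_mul]
  simp only [excessGrowth, mul_add, sum_add_distrib, hrow, hcol]
  ring

theorem stmt7_general (d : ℕ) (a : Matrix (Fin d) (Fin d) ℝ)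
    (π ρ : Fin d → ℝ)
    (hπ : (∀ i, 0 ≤ π i) ∧ ∑ i, π i = 1)
    (τ : Fin d → Fin d → ℝ)
    (hτ : ∀ i j, τ i j = ∑ k, ∑ l,
      (ρ k - if i = k then 1 else 0) * a k l * (ρ l - if j = l then 1 else 0)) :
    (1 / 2) * (∑ i, π i * a i i - ∑ i, ∑ j, π i * π j * a i j)
      = (1 / 2) * (∑ i, π i * τ i i - ∑ i, ∑ j, π i * π j * τ i j) := by
  have hτ_eq : τ = fun i j => a i j + (ρ ⬝ᵥ a *ᵥ ρ - (a *ᵥ ρ) i) + -(ρ ᵥ* a) j := by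
    ext i j
    rw [hτ, sum_sum_sub_ite_mul_mul_sub_ite, sub_eq_add_neg]
  change excessGrowth π a = excessGrowth π τ
  rw [hτ_eq]
  exact (excessGrowth_add_row_add_col hπ.2 a _ _).symm

theorem stmt7 (d : ℕ) (a : Matrix (Fin d) (Fin d) ℝ) (ha : a.IsSymm)
    (π ρ : Fin d → ℝ)
    (hπ : (∀ i, 0 ≤ π i) ∧ ∑ i, π i = 1) (hρ : (∀ i, 0 ≤ ρ i) ∧ ∑ i, ρ i = 1)
    (τ : Fin d → Fin d → ℝ)
    (hτ : ∀ i j, τ i j = ∑ k, ∑ l,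
      (ρ k - if i = k then 1 else 0) * a k l * (ρ l - if j = l then 1 else 0)) :
    (1 / 2) * (∑ i, π i * a i i - ∑ i, ∑ j, π i * π j * a i j)
      = (1 / 2) * (∑ i, π i * τ i i - ∑ i, ∑ j, π i * π j * τ i j) :=
  stmt7_general d a π ρ hπ τ hτ
end

section
/- Let G be C² and strictly positive on an open neighborhood U of Δ^d_+ in ℝ^d, let h be the log-sum-exp function, μ = ∇h(x), g_k = ∂_k log G(μ), π_i = μ_i(1+g_i−Σ_k μ_k g_k), and Γ(x) = log G(∇h(x)). Then the second partial derivatives of Γ are given by ∂_{ij}Γ = Σ_{k,ℓ} (G_{x_ℓ x_k}(μ)/G(μ)) μ_ℓ μ_k (μ_j − δ_{jℓ})(μ_i − δ_{ik}) − π_i π_j + μ_i μ_j + δ_{ij}(π_i − μ_i). -/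
/-!
Write `Γ = L ∘ softmax` with `L = log G`. Applying the first-order chain rule twice gives
`∂ᵢⱼΓ = ∑ₖₗ ∂ₗ∂ₖL(μ) ∂ᵢμₗ ∂ⱼμₖ + ∑ₖ ∂ₖL(μ) ∂ᵢ∂ⱼμₖ`. Substituting `∂ₗ∂ₖL = G_{lk}/G - gₗgₖ`
(with `G_{lk}` symmetric since `G` is `C²`) and using `∑ₗ gₗ ∂ᵢμₗ = πᵢ - μᵢ`, everything except
the `G`-Hessian term collapses to `-πᵢπⱼ + μᵢμⱼ + δᵢⱼ(πᵢ - μᵢ)`.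
-/

open Topology

section SecondDerivatives

variable {E : Type*} [NormedAddCommGroup E] [NormedSpace ℝ E] {f : E → ℝ} {z : E}

lemma ContDiffAt.differentiableAt_fderiv_apply (hf : ContDiffAt ℝ 2 f z) (v : E) :
    DifferentiableAt ℝ (fun y => fderiv ℝ f y v) z :=
  ((hf.fderiv_right (m := 1) (by norm_num)).clm_apply contDiffAt_const).differentiableAt
    (by norm_num)

lemma ContDiffAt.fderiv_fderiv_apply_comm (hf : ContDiffAt ℝ 2 f z) (v w : E) :
    fderiv ℝ (fun y => fderiv ℝ f y v) z w = fderiv ℝ (fun y => fderiv ℝ f y w) z v := by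
  have hd : DifferentiableAt ℝ (fderiv ℝ f) z :=
    (hf.fderiv_right (m := 1) (by norm_num)).differentiableAt (by norm_num)
  simp only [fderiv_clm_apply hd (differentiableAt_const _), fderiv_fun_const, Pi.zero_apply,
    ContinuousLinearMap.comp_zero, zero_add, ContinuousLinearMap.flip_apply]
  exact hf.isSymmSndFDerivAt (by simp [minSmoothness_of_isRCLikeNormedField]) w v

lemma fderiv_fderiv_log_apply (hf : ContDiffAt ℝ 2 f z) (hz : f z ≠ 0) (v w : E) :
    fderiv ℝ (fun y => fderiv ℝ (fun u => Real.log (f u)) y v) z w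
      = fderiv ℝ (fun y => fderiv ℝ f y v) z w / f z
        - fderiv ℝ (fun u => Real.log (f u)) z v * fderiv ℝ (fun u => Real.log (f u)) z w := by
  have hev : (fun y => fderiv ℝ f y v)
      =ᶠ[𝓝 z] fun y => f y * fderiv ℝ (fun u => Real.log (f u)) y v := by
    filter_upwards [hf.eventually (by simp), hf.continuousAt.eventually_ne hz] with y hy hy0
    rw [fderiv.log (hy.differentiableAt (by norm_num)) hy0, smul_apply,
      smul_eq_mul, mul_inv_cancel_left₀ hy0]
  have hd := hf.differentiableAt (by norm_num)
  rw [hev.fderiv_eq, fderiv_fun_mul hd ((hf.log hz).differentiableAt_fderiv_apply v),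
    fderiv.log hd hz]
  simp only [add_apply, smul_apply, smul_eq_mul]
  field_simp
  ring

end SecondDerivatives

section CoordinateChainRule

variable {E κ : Type*} [NormedAddCommGroup E] [NormedSpace ℝ E] [Fintype κ] [DecidableEq κ]

lemma fderiv_comp_apply_eq_sum {F : (κ → ℝ) → ℝ} {σ : E → κ → ℝ} {x : E}
    (hF : DifferentiableAt ℝ F (σ x)) (hσ : DifferentiableAt ℝ σ x) (v : E) :
    fderiv ℝ (fun y => F (σ y)) x v
      = ∑ k, fderiv ℝ F (σ x) (Pi.single k 1) * fderiv ℝ (fun y => σ y k) x v := by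
  rw [fderiv_fun_comp x hF hσ, ContinuousLinearMap.comp_apply, pi_eq_sum_univ' (fderiv ℝ σ x v),
    map_sum]
  simp [fderiv_apply hσ, mul_comm]

end CoordinateChainRule

noncomputable def softmax {ι : Type*} [Fintype ι] (x : ι → ℝ) : ι → ℝ :=
  fun m => Real.exp (x m) / ∑ l, Real.exp (x l)

/-- `∂ᵢμₖ = μₖ (δᵢₖ - μᵢ)`, expressed through the value `μ` of the softmax map. -/
def softmaxJac {ι : Type*} [DecidableEq ι] (μ : ι → ℝ) (i k : ι) : ℝ :=
  μ k * ((if i = k then 1 else 0) - μ i)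

section SoftmaxJac

variable {ι : Type*} [Fintype ι] [DecidableEq ι]

lemma sum_mul_ite_sub (f : ι → ℝ) (j : ι) (c : ℝ) :
    ∑ k, f k * ((if j = k then 1 else 0) - c) = f j - c * ∑ k, f k := by
  simp [mul_sub, Finset.sum_sub_distrib, Finset.mul_sum, mul_comm]

lemma sum_mul_softmaxJac (μ f : ι → ℝ) (i : ι) :
    ∑ l, f l * softmaxJac μ i l = μ i * (f i - ∑ l, μ l * f l) := by
  simp only [softmaxJac, ← mul_assoc, sum_mul_ite_sub]
  simp only [mul_comm]
  ring

lemma hessian_sum_softmaxJac (A : ι → ι → ℝ) (μ g π : ι → ℝ)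
    (hπ : ∀ i, π i = μ i * (1 + g i - ∑ k, μ k * g k)) (i j : ι) :
    ∑ k, (∑ l, (A l k - g k * g l) * softmaxJac μ i l) * softmaxJac μ j k
        + ∑ k, g k * (softmaxJac μ i k * ((if j = k then 1 else 0) - μ j)
          - μ k * softmaxJac μ i j)
      = (∑ k, ∑ l, A k l * μ l * μ k * (μ j - if j = l then 1 else 0)
          * (μ i - if i = k then 1 else 0))
        - π i * π j + μ i * μ j + (if i = j then 1 else 0) * (π i - μ i) := by
  have hgrad : ∀ i, ∑ l, g l * softmaxJac μ i l = π i - μ i := fun i => by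
    rw [sum_mul_softmaxJac, hπ]
    ring
  have hA : ∑ k, (∑ l, A l k * softmaxJac μ i l) * softmaxJac μ j k
      = ∑ k, ∑ l, A k l * μ l * μ k * (μ j - if j = l then 1 else 0)
          * (μ i - if i = k then 1 else 0) := by
    simp only [Finset.sum_mul]
    rw [Finset.sum_comm]
    refine Finset.sum_congr rfl fun k _ => Finset.sum_congr rfl fun l _ => ?_
    simp only [softmaxJac]
    ring
  have hgg : ∑ k, (∑ l, g k * g l * softmaxJac μ i l) * softmaxJac μ j k
      = (π i - μ i) * (π j - μ j) := by
    calc _ = ∑ k, (π i - μ i) * (g k * softmaxJac μ j k) := by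
          refine Finset.sum_congr rfl fun k _ => ?_
          simp only [mul_assoc, ← Finset.mul_sum, hgrad]
          ring
      _ = _ := by rw [← Finset.mul_sum, hgrad]
  have hmixed : ∑ k, g k * (softmaxJac μ i k * ((if j = k then 1 else 0) - μ j)
        - μ k * softmaxJac μ i j)
      = g j * softmaxJac μ i j - μ j * (π i - μ i) - softmaxJac μ i j * ∑ k, μ k * g k := by
    have hdiag : ∑ k, g k * (softmaxJac μ i k * ((if j = k then 1 else 0) - μ j))
        = g j * softmaxJac μ i j - μ j * (π i - μ i) := by
      simp only [← mul_assoc, sum_mul_ite_sub, hgrad]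
    have hoff : ∑ k, g k * (μ k * softmaxJac μ i j) = softmaxJac μ i j * ∑ k, μ k * g k := by
      rw [Finset.mul_sum]
      exact Finset.sum_congr rfl fun k _ => by ring
    rw [← hdiag, ← hoff, ← Finset.sum_sub_distrib]
    simp only [mul_sub]
  simp only [sub_mul, Finset.sum_sub_distrib, hA, hgg, hmixed]
  rcases eq_or_ne i j with rfl | hij
  · simp only [softmaxJac, hπ, ↓reduceIte]
    ring
  · simp only [softmaxJac, hπ, hij, ↓reduceIte]
    ring

end SoftmaxJac

section Softmax

variable {ι : Type*} [Fintype ι]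

lemma sum_exp_pos [Nonempty ι] (x : ι → ℝ) : 0 < ∑ l, Real.exp (x l) :=
  Finset.sum_pos (fun _ _ => Real.exp_pos _) Finset.univ_nonempty

lemma softmax_pos [Nonempty ι] (x : ι → ℝ) (m : ι) : 0 < softmax x m :=
  div_pos (Real.exp_pos _) (sum_exp_pos x)

lemma sum_softmax [Nonempty ι] (x : ι → ℝ) : ∑ m, softmax x m = 1 := by
  unfold softmax
  rw [← Finset.sum_div, div_self (sum_exp_pos x).ne']

lemma differentiable_softmax [Nonempty ι] : Differentiable ℝ (softmax : (ι → ℝ) → ι → ℝ) := by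
  refine differentiable_pi.2 fun m x => ?_
  simp only [softmax, div_eq_mul_inv]
  fun_prop (disch := exact (sum_exp_pos x).ne')

lemma differentiable_softmax_apply (k : ι) : Differentiable ℝ fun y : ι → ℝ => softmax y k :=
  have : Nonempty ι := ⟨k⟩
  differentiable_pi.1 differentiable_softmax k

variable [DecidableEq ι]

lemma fderiv_softmax_apply_single (x : ι → ℝ) (i k : ι) :
    fderiv ℝ (fun y => softmax y k) x (Pi.single i 1) = softmaxJac (softmax x) i k := by
  have : Nonempty ι := ⟨i⟩
  have hS : HasFDerivAt (fun y : ι → ℝ => ∑ l, Real.exp (y l))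
      (∑ l, Real.exp (x l) • ContinuousLinearMap.proj l) x :=
    HasFDerivAt.fun_sum fun l _ => (hasFDerivAt_apply l x).exp
  have hinv := (hasDerivAt_inv (sum_exp_pos x).ne').comp_hasFDerivAt x hS
  have h : HasFDerivAt (fun y => Real.exp (y k) * (∑ l, Real.exp (y l))⁻¹) _ x :=
    ((hasFDerivAt_apply k x).exp).fun_mul hinv
  simp only [softmax, div_eq_mul_inv]
  rw [h.fderiv]
  simp only [softmaxJac, softmax, add_apply, smul_apply, sum_apply,
    ContinuousLinearMap.proj_apply, smul_eq_mul, Pi.single_apply, mul_ite, mul_one, mul_zero,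
    Finset.sum_ite_eq', Finset.mem_univ, if_true, eq_comm (a := k)]
  split_ifs <;> field_simp <;> ring

lemma fderiv_comp_softmax_single {F : (ι → ℝ) → ℝ} {x : ι → ℝ}
    (hF : DifferentiableAt ℝ F (softmax x)) (j : ι) :
    fderiv ℝ (fun y => F (softmax y)) x (Pi.single j 1)
      = ∑ k, fderiv ℝ F (softmax x) (Pi.single k 1) * softmaxJac (softmax x) j k := by
  have : Nonempty ι := ⟨j⟩
  simp only [fderiv_comp_apply_eq_sum hF (differentiable_softmax x), fderiv_softmax_apply_single]

lemma fderiv_softmaxJac_softmax_single (x : ι → ℝ) (i j k : ι) :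
    fderiv ℝ (fun y => softmaxJac (softmax y) j k) x (Pi.single i 1)
      = softmaxJac (softmax x) i k * ((if j = k then 1 else 0) - softmax x j)
        - softmax x k * softmaxJac (softmax x) i j := by
  unfold softmaxJac
  rw [fderiv_fun_mul (differentiable_softmax_apply k x)
    ((differentiable_softmax_apply j x).const_sub _), fderiv_const_sub]
  simp only [add_apply, smul_apply, neg_apply, smul_eq_mul]
  rw [fderiv_softmax_apply_single, fderiv_softmax_apply_single]
  unfold softmaxJac
  ring

theorem fderiv_fderiv_comp_softmax_single {F : (ι → ℝ) → ℝ} {x : ι → ℝ}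
    (hF : ∀ y, DifferentiableAt ℝ F (softmax y))
    (hF' : ∀ k, DifferentiableAt ℝ (fun z => fderiv ℝ F z (Pi.single k 1)) (softmax x))
    (i j : ι) :
    fderiv ℝ (fun y => fderiv ℝ (fun z => F (softmax z)) y (Pi.single j 1)) x (Pi.single i 1)
      = ∑ k, (∑ l, fderiv ℝ (fun z => fderiv ℝ F z (Pi.single k 1)) (softmax x) (Pi.single l 1)
            * softmaxJac (softmax x) i l) * softmaxJac (softmax x) j k
        + ∑ k, fderiv ℝ F (softmax x) (Pi.single k 1)
            * (softmaxJac (softmax x) i k * ((if j = k then 1 else 0) - softmax x j)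
              - softmax x k * softmaxJac (softmax x) i j) := by
  have : Nonempty ι := ⟨i⟩
  have hgrad : ∀ k, DifferentiableAt ℝ (fun y => fderiv ℝ F (softmax y) (Pi.single k 1)) x :=
    fun k => (hF' k).comp x (differentiable_softmax x)
  have hJac : ∀ k, DifferentiableAt ℝ (fun y => softmaxJac (softmax y) j k) x := fun k =>
    (differentiable_softmax_apply k x).fun_mul ((differentiable_softmax_apply j x).const_sub _)
  simp only [fun y => fderiv_comp_softmax_single (hF y) j]
  rw [fderiv_fun_sum fun k _ => (hgrad k).fun_mul (hJac k), sum_apply, ← Finset.sum_add_distrib]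
  refine Finset.sum_congr rfl fun k _ => ?_
  rw [fderiv_fun_mul (hgrad k) (hJac k), add_apply, smul_apply, smul_apply, smul_eq_mul,
    smul_eq_mul, fderiv_comp_softmax_single (hF' k) i, fderiv_softmaxJac_softmax_single]
  ring

end Softmax

theorem stmt14 (d : ℕ) (U : Set (Fin d → ℝ)) (hU : IsOpen U)
    (hΔ : {q : Fin d → ℝ | (∀ i, 0 < q i) ∧ ∑ i, q i = 1} ⊆ U)
    (G : (Fin d → ℝ) → ℝ) (hG : ContDiffOn ℝ 2 G U) (hGpos : ∀ y ∈ U, 0 < G y)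
    (x μ g π : Fin d → ℝ)
    (hμ : ∀ i, μ i = Real.exp (x i) / ∑ k, Real.exp (x k))
    (hg : ∀ i, g i = fderiv ℝ (fun z => Real.log (G z)) μ (Pi.single i 1))
    (hπ : ∀ i, π i = μ i * (1 + g i - ∑ k, μ k * g k))
    (i j : Fin d) :
    fderiv ℝ (fun y =>
        fderiv ℝ (fun z : Fin d → ℝ =>
          Real.log (G (fun m => Real.exp (z m) / ∑ l, Real.exp (z l)))) y (Pi.single j 1))
      x (Pi.single i 1)
      = (∑ k, ∑ l,
          (fderiv ℝ (fun y => fderiv ℝ G y (Pi.single k 1)) μ (Pi.single l 1) / G μ)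
            * μ l * μ k * (μ j - if j = l then 1 else 0) * (μ i - if i = k then 1 else 0))
        - π i * π j + μ i * μ j + (if i = j then 1 else 0) * (π i - μ i) := by
  have : Nonempty (Fin d) := ⟨i⟩
  obtain rfl : μ = softmax x := funext hμ
  have hsimplex : ∀ y, softmax y ∈ U := fun y => hΔ ⟨softmax_pos y, sum_softmax y⟩
  have hGsmooth : ∀ y, ContDiffAt ℝ 2 G (softmax y) := fun y =>
    hG.contDiffAt (hU.mem_nhds (hsimplex y))
  have hGne : ∀ y, G (softmax y) ≠ 0 := fun y => (hGpos _ (hsimplex y)).ne'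
  have hlogG : ∀ y, ContDiffAt ℝ 2 (fun u => Real.log (G u)) (softmax y) := fun y =>
    (hGsmooth y).log (hGne y)
  have hHess : ∀ k l, fderiv ℝ (fun y => fderiv ℝ (fun u => Real.log (G u)) y (Pi.single k 1))
      (softmax x) (Pi.single l 1)
      = fderiv ℝ (fun y => fderiv ℝ G y (Pi.single l 1)) (softmax x) (Pi.single k 1)
          / G (softmax x) - g k * g l := fun k l => by
    rw [fderiv_fderiv_log_apply (hGsmooth x) (hGne x), (hGsmooth x).fderiv_fderiv_apply_comm,
      hg, hg]
  refine (fderiv_fderiv_comp_softmax_single (fun y => (hlogG y).differentiableAt two_ne_zero)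
    (fun k => (hlogG x).differentiableAt_fderiv_apply _) i j).trans ?_
  simp only [hHess, ← hg]
  exact hessian_sum_softmaxJac _ _ g π hπ i j
end

section
/- Let Z: [0,∞) → ℝ_+ be a continuous strictly positive path admitting quadratic variation [Z] along a fixed refining sequence of partitions. Then log Z admits quadratic variation along the same sequence and [log Z](t) = ∫_0^t Z(s)^{−2} d[Z](s) (Riemann–Stieltjes integral against the nondecreasing continuous function [Z]). -/
/-!
Since `(b - a) / b ≤ log b - log a ≤ (b - a) / a` for `a, b > 0`, each squared increment of
`log Z` differs from `Z(p k)⁻² (ΔZ_k)²` by at most `|ΔZ⁻²_k| (ΔZ_k)²`. On a fine mesh the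
quadratic sums of `log Z` are therefore, up to `ε` times those of `Z`, the integrals of `Z⁻²`
against the discrete measures `∑ (ΔZ_k)² δ_{p k}`. The distribution functions of these measures
converge to `[Z]` by hypothesis, and on a compact interval this gives convergence of integrals
of continuous functions: compare both with a left Riemann–Stieltjes sum on a fine grid.
-/

open Filter Topology

/-- Sum of squared increments of `X` along the partition `p` up to time `t`. -/
noncomputable def qvSum (p : ℕ → ℝ) (X : ℝ → ℝ) (t : ℝ) : ℝ :=
  ∑' k : ℕ, if p k ≤ t then (X (p (k + 1)) - X (p k)) ^ 2 else 0

open MeasureTheory Set Real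

theorem tendsto_nhds_zero_of_forall_abs_le_mul {ι : Type*} {l : Filter ι} {a c : ι → ℝ}
    {C : ℝ} (hc : Tendsto c l (𝓝 C)) (h : ∀ ε > 0, ∀ᶠ i in l, |a i| ≤ ε * c i) :
    Tendsto a l (𝓝 0) := by
  refine Metric.tendsto_nhds.2 fun ε hε => ?_
  filter_upwards [hc.eventually (gt_mem_nhds (lt_of_le_of_lt (le_abs_self C) (lt_add_one _))),
    h (ε / (2 * (|C| + 1))) (by positivity)] with i hci hai
  calc dist (a i) 0 = |a i| := by rw [Real.dist_eq, sub_zero]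
    _ ≤ ε / (2 * (|C| + 1)) * (|C| + 1) := hai.trans (by gcongr)
    _ < ε := by field_simp; linarith

theorem abs_setIntegral_sub_mul_measureReal_le {α : Type*} [MeasurableSpace α] {μ : Measure α}
    {s : Set α} {f : α → ℝ} {y ε : ℝ} (hμs : μ s < ⊤) (hf : IntegrableOn f s μ)
    (h : ∀ x ∈ s, |f x - y| ≤ ε) :
    |∫ x in s, f x ∂μ - y * μ.real s| ≤ ε * μ.real s := by
  have hsub : ∫ x in s, f x ∂μ - y * μ.real s = ∫ x in s, (f x - y) ∂μ := by
    rw [integral_sub hf (integrableOn_const hμs.ne), setIntegral_const, smul_eq_mul, mul_comm]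
  rw [hsub, ← Real.norm_eq_abs]
  exact norm_setIntegral_le_of_norm_le_const hμs h

theorem setIntegral_Ioc_eq_sum {μ : Measure ℝ} {f : ℝ → ℝ} {s : ℕ → ℝ} {J : ℕ}
    (hs : Monotone s) (hf : IntegrableOn f (Ioc (s 0) (s J)) μ) :
    ∫ x in Ioc (s 0) (s J), f x ∂μ =
      ∑ j ∈ Finset.range J, ∫ x in Ioc (s j) (s (j + 1)), f x ∂μ := by
  have hblock : ∀ j < J, IntegrableOn f (Ioc (s j) (s (j + 1))) μ := fun j hj =>
    hf.mono_set (Ioc_subset_Ioc (hs j.zero_le) (hs hj))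
  rw [← intervalIntegral.integral_of_le (hs J.zero_le),
    ← intervalIntegral.sum_integral_adjacent_intervals fun j hj =>
      (intervalIntegrable_iff_integrableOn_Ioc_of_le (hs j.le_succ)).2 (hblock j hj)]
  exact Finset.sum_congr rfl fun j _ => intervalIntegral.integral_of_le (hs j.le_succ)

theorem abs_setIntegral_Ioc_sub_sum_le {μ : Measure ℝ} [IsLocallyFiniteMeasure μ]
    {f : ℝ → ℝ} {s : ℕ → ℝ} {J : ℕ} {ε : ℝ} (hs : Monotone s)
    (hf : IntegrableOn f (Ioc (s 0) (s J)) μ)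
    (h : ∀ j < J, ∀ x ∈ Ioc (s j) (s (j + 1)), |f x - f (s j)| ≤ ε) :
    |∫ x in Ioc (s 0) (s J), f x ∂μ -
        ∑ j ∈ Finset.range J, f (s j) * μ.real (Ioc (s j) (s (j + 1)))|
      ≤ ε * μ.real (Ioc (s 0) (s J)) := by
  have hmeasure :
      μ.real (Ioc (s 0) (s J)) = ∑ j ∈ Finset.range J, μ.real (Ioc (s j) (s (j + 1))) := by
    simpa using setIntegral_Ioc_eq_sum (f := fun _ => (1 : ℝ)) hs
      (integrableOn_const measure_Ioc_lt_top.ne)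
  rw [setIntegral_Ioc_eq_sum hs hf, hmeasure, Finset.mul_sum, ← Finset.sum_sub_distrib]
  refine (Finset.abs_sum_le_sum_abs _ _).trans (Finset.sum_le_sum fun j hj => ?_)
  have hj := Finset.mem_range.1 hj
  exact abs_setIntegral_sub_mul_measureReal_le measure_Ioc_lt_top
    (hf.mono_set (Ioc_subset_Ioc (hs j.zero_le) (hs hj))) (h j hj)

theorem exists_grid_forall_abs_sub_le {f : ℝ → ℝ} {a b ε : ℝ} (hab : a ≤ b)
    (hf : ContinuousOn f (Icc a b)) (hε : 0 < ε) :
    ∃ (J : ℕ) (s : ℕ → ℝ), Monotone s ∧ s 0 = a ∧ s J = b ∧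
      ∀ j < J, ∀ x ∈ Ioc (s j) (s (j + 1)), |f x - f (s j)| ≤ ε := by
  obtain ⟨δ, hδ, hfδ⟩ :=
    Metric.uniformContinuousOn_iff_le.1 (isCompact_Icc.uniformContinuousOn_of_continuous hf) ε hε
  obtain ⟨J, hJ⟩ := exists_nat_gt ((b - a) / δ)
  have hJ0 : (0 : ℝ) < J := lt_of_le_of_lt (div_nonneg (sub_nonneg.2 hab) hδ.le) hJ
  have hstep : (b - a) / J ≤ δ := by
    rw [div_le_iff₀ hJ0]; rw [div_lt_iff₀ hδ] at hJ; linarith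
  set s : ℕ → ℝ := fun j => a + j * ((b - a) / J)
  have hs : Monotone s := fun i j hij => by
    have : (i : ℝ) ≤ j := by exact_mod_cast hij
    simp only [s]; gcongr
  have hsJ : s J = b := by simp only [s]; field_simp; ring
  refine ⟨J, s, hs, by simp [s], hsJ, fun j hj x hx => ?_⟩
  have hsa : a ≤ s j := by simpa [s] using hs j.zero_le
  have hsb : s (j + 1) ≤ b := hsJ ▸ hs hj
  have hsucc : s (j + 1) = s j + (b - a) / J := by simp only [s]; push_cast; ring
  have hdist : dist x (s j) ≤ δ := by
    rw [Real.dist_eq, abs_of_pos (sub_pos.2 hx.1)]; linarith [hx.2]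
  simpa [Real.dist_eq] using
    hfδ x ⟨hsa.trans hx.1.le, hx.2.trans hsb⟩ (s j) ⟨hsa, hx.1.le.trans (hx.2.trans hsb)⟩ hdist

theorem measureReal_Ioc_sub_measureReal_Ioc {μ : Measure ℝ} [IsLocallyFiniteMeasure μ]
    {a u v : ℝ} (hau : a ≤ u) (huv : u ≤ v) :
    μ.real (Ioc a v) - μ.real (Ioc a u) = μ.real (Ioc u v) := by
  rw [← Ioc_union_Ioc_eq_Ioc hau huv, measureReal_union (Ioc_disjoint_Ioc_of_le le_rfl)
    measurableSet_Ioc measure_Ioc_lt_top.ne measure_Ioc_lt_top.ne, add_sub_cancel_left]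

theorem tendsto_setIntegral_Ioc_of_tendsto_measureReal {ι : Type*} {l : Filter ι}
    {μs : ι → Measure ℝ} [∀ i, IsLocallyFiniteMeasure (μs i)] {μ : Measure ℝ}
    [IsLocallyFiniteMeasure μ] {f : ℝ → ℝ} {a b : ℝ} (hab : a ≤ b)
    (hf : ContinuousOn f (Icc a b))
    (h : ∀ s ∈ Icc a b, Tendsto (fun i => (μs i).real (Ioc a s)) l (𝓝 (μ.real (Ioc a s)))) :
    Tendsto (fun i => ∫ x in Ioc a b, f x ∂μs i) l (𝓝 (∫ x in Ioc a b, f x ∂μ)) := by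
  rw [← tendsto_sub_nhds_zero_iff]
  refine tendsto_nhds_zero_of_forall_abs_le_mul
    (((h b ⟨hab, le_rfl⟩).add_const 1).add_const (μ.real (Ioc a b))) fun ε hε => ?_
  obtain ⟨J, s, hs, hs0, hsJ, hosc⟩ := exists_grid_forall_abs_sub_le hab hf hε
  have hsmem : ∀ j ≤ J, s j ∈ Icc a b := fun j hj => ⟨hs0 ▸ hs j.zero_le, hsJ ▸ hs hj⟩
  have hfint (ν : Measure ℝ) [IsLocallyFiniteMeasure ν] : IntegrableOn f (Ioc (s 0) (s J)) ν := by
    rw [hs0, hsJ]; exact hf.integrableOn_Icc.mono_set Ioc_subset_Icc_self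
  let R : Measure ℝ → ℝ := fun ν =>
    ∑ j ∈ Finset.range J, f (s j) * ν.real (Ioc (s j) (s (j + 1)))
  have hR : Tendsto (fun i => R (μs i)) l (𝓝 (R μ)) := by
    refine tendsto_finsetSum _ fun j hj => ?_
    have hj := Finset.mem_range.1 hj
    have hlo := (hsmem j hj.le).1
    simp only [← measureReal_Ioc_sub_measureReal_Ioc hlo (hs j.le_succ)]
    exact ((h _ (hsmem _ hj)).sub (h _ (hsmem j hj.le))).const_mul _
  filter_upwards [Metric.tendsto_nhds.1 hR ε hε] with i hRi
  have hRi := (Real.dist_eq _ _ ▸ hRi).le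
  have herr := abs_setIntegral_Ioc_sub_sum_le hs (hfint (μs i)) hosc
  have herr' := abs_setIntegral_Ioc_sub_sum_le hs (hfint μ) hosc
  rw [hs0, hsJ] at herr herr'
  set I := ∫ x in Ioc a b, f x ∂μs i
  set Iμ := ∫ x in Ioc a b, f x ∂μ
  calc |I - Iμ| ≤ |I - R (μs i)| + |R (μs i) - R μ| + |Iμ - R μ| := by
        rw [abs_sub_comm Iμ]
        linarith [abs_sub_le I (R (μs i)) Iμ, abs_sub_le (R (μs i)) (R μ) Iμ]
    _ ≤ ε * (μs i).real (Ioc a b) + ε + ε * μ.real (Ioc a b) := by gcongr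
    _ = ε * ((μs i).real (Ioc a b) + 1 + μ.real (Ioc a b)) := by ring

-- Only the first `N` increments are charged, which keeps the measure finite; `N` is later taken
-- beyond the time horizon, so no relevant increment is lost.
noncomputable def incrementMeasure (p : ℕ → ℝ) (X : ℝ → ℝ) (N : ℕ) : Measure ℝ :=
  ∑ k ∈ Finset.range N, ENNReal.ofReal ((X (p (k + 1)) - X (p k)) ^ 2) • Measure.dirac (p k)

instance (p : ℕ → ℝ) (X : ℝ → ℝ) (N : ℕ) : IsFiniteMeasure (incrementMeasure p X N) :=
  ⟨by simp [incrementMeasure, ENNReal.sum_lt_top]⟩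

theorem qvSum_eq_sum {p : ℕ → ℝ} (X : ℝ → ℝ) {t : ℝ} {N : ℕ} (hN : ∀ k ≥ N, t < p k) :
    qvSum p X t =
      ∑ k ∈ Finset.range N, if p k ≤ t then (X (p (k + 1)) - X (p k)) ^ 2 else 0 :=
  tsum_eq_sum fun k hk => if_neg (not_le.2 (hN k (by simpa using hk)))

theorem setIntegral_Ioc_incrementMeasure {p : ℕ → ℝ} (X : ℝ → ℝ) (f : ℝ → ℝ) {a t : ℝ}
    {N : ℕ} (ha : ∀ k, a < p k) :
    ∫ x in Ioc a t, f x ∂incrementMeasure p X N =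
      ∑ k ∈ Finset.range N,
        if p k ≤ t then f (p k) * (X (p (k + 1)) - X (p k)) ^ 2 else 0 := by
  rw [← integral_indicator measurableSet_Ioc, incrementMeasure,
    integral_finsetSum_measure fun k _ =>
      (integrable_dirac enorm_lt_top).smul_measure ENNReal.ofReal_ne_top]
  refine Finset.sum_congr rfl fun k _ => ?_
  rw [integral_smul_measure, integral_dirac, ENNReal.toReal_ofReal (sq_nonneg _), smul_eq_mul]
  by_cases hk : p k ≤ t
  · rw [indicator_of_mem (show p k ∈ Ioc a t from ⟨ha k, hk⟩), if_pos hk, mul_comm]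
  · rw [indicator_of_notMem fun h => hk h.2, if_neg hk, mul_zero]

theorem measureReal_Ioc_incrementMeasure {p : ℕ → ℝ} (X : ℝ → ℝ) {a t : ℝ} {N : ℕ}
    (ha : ∀ k, a < p k) (hN : ∀ k ≥ N, t < p k) :
    (incrementMeasure p X N).real (Ioc a t) = qvSum p X t := by
  simpa [qvSum_eq_sum X hN] using
    setIntegral_Ioc_incrementMeasure X (fun _ => (1 : ℝ)) (N := N) ha

theorem abs_sq_log_sub_log_sub_le {a b : ℝ} (ha : 0 < a) (hb : 0 < b) :
    |(log b - log a) ^ 2 - a ^ (-2 : ℤ) * (b - a) ^ 2|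
      ≤ |b ^ (-2 : ℤ) - a ^ (-2 : ℤ)| * (b - a) ^ 2 := by
  set u := (b - a) / a
  set v := (b - a) / b
  have hxu : log b - log a ≤ u := by
    rw [← log_div hb.ne' ha.ne']
    have := log_le_sub_one_of_pos (div_pos hb ha)
    simp only [u, sub_div, div_self ha.ne'] at *; linarith
  have hvx : v ≤ log b - log a := by
    have := log_le_sub_one_of_pos (div_pos ha hb)
    rw [log_div ha.ne' hb.ne'] at this
    simp only [v, sub_div, div_self hb.ne'] at *; linarith
  have hu : a ^ (-2 : ℤ) * (b - a) ^ 2 = u ^ 2 := by simp only [u]; field_simp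
  have hv : b ^ (-2 : ℤ) * (b - a) ^ 2 = v ^ 2 := by simp only [v]; field_simp
  have hD : |b ^ (-2 : ℤ) - a ^ (-2 : ℤ)| * (b - a) ^ 2 = |v ^ 2 - u ^ 2| := by
    rw [← hu, ← hv, ← sub_mul, abs_mul, abs_of_nonneg (sq_nonneg (b - a))]
  have hsq : (log b - log a) ^ 2 ∈ uIcc (u ^ 2) (v ^ 2) := by
    rcases le_total a b with hab | hab
    · have hv0 : 0 ≤ v := div_nonneg (sub_nonneg.2 hab) hb.le
      exact mem_uIcc.2
        (Or.inr ⟨pow_le_pow_left₀ hv0 hvx 2, pow_le_pow_left₀ (hv0.trans hvx) hxu 2⟩)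
    · have hu0 : u ≤ 0 := div_nonpos_of_nonpos_of_nonneg (sub_nonpos.2 hab) ha.le
      exact mem_uIcc.2 (Or.inl ⟨by nlinarith, by nlinarith⟩)
  rw [hu, hD]
  exact abs_sub_left_of_mem_uIcc hsq

theorem abs_qvSum_log_sub_sum_le {p : ℕ → ℝ} {Z : ℝ → ℝ} {t ε : ℝ} {N : ℕ}
    (hZ : ∀ s, 0 < Z s) (hN : ∀ k ≥ N, t < p k)
    (hosc : ∀ k, p k ≤ t → |Z (p (k + 1)) ^ (-2 : ℤ) - Z (p k) ^ (-2 : ℤ)| ≤ ε) :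
    |qvSum p (fun s => log (Z s)) t - ∑ k ∈ Finset.range N,
        if p k ≤ t then Z (p k) ^ (-2 : ℤ) * (Z (p (k + 1)) - Z (p k)) ^ 2 else 0|
      ≤ ε * qvSum p Z t := by
  rw [qvSum_eq_sum _ hN, qvSum_eq_sum _ hN, Finset.mul_sum, ← Finset.sum_sub_distrib]
  refine (Finset.abs_sum_le_sum_abs _ _).trans (Finset.sum_le_sum fun k _ => ?_)
  by_cases hk : p k ≤ t
  · simp only [if_pos hk]
    exact (abs_sq_log_sub_log_sub_le (hZ _) (hZ _)).trans (by gcongr; exact hosc k hk)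
  · simp [if_neg hk]

theorem eventually_forall_abs_sub_le_of_mesh {ι : Type*} {l : Filter ι} {p : ι → ℕ → ℝ}
    (hp : ∀ i k, 0 ≤ p i k) (hmono : ∀ i, Monotone (p i)) {t : ℝ}
    (hmesh : ∀ δ > 0, ∀ᶠ i in l, ∀ k, p i k ≤ t → p i (k + 1) - p i k < δ)
    {g : ℝ → ℝ} (hg : ContinuousOn g (Icc 0 (t + 1))) {ε : ℝ} (hε : 0 < ε) :
    ∀ᶠ i in l, ∀ k, p i k ≤ t → |g (p i (k + 1)) - g (p i k)| ≤ ε := by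
  obtain ⟨δ, hδ, hgδ⟩ :=
    Metric.uniformContinuousOn_iff_le.1 (isCompact_Icc.uniformContinuousOn_of_continuous hg) ε hε
  filter_upwards [hmesh (min δ 1) (by positivity)] with i hi k hk
  have hstep := hi k hk
  have hle := hmono i k.le_succ
  rw [← Real.dist_eq]
  refine hgδ _ ⟨hp i _, by linarith [min_le_right δ 1]⟩ _ ⟨hp i k, by linarith⟩ ?_
  rw [Real.dist_eq, abs_of_nonneg (sub_nonneg.2 hle)]
  linarith [min_le_left δ 1]

-- The intervals start at `-1` so that they contain every atom `p n k ≥ 0` of the discrete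
-- measures; on the limit side they see `dQ` on `(0, ∞)`, whose distribution function is `Q - Q 0`.
theorem tendsto_measureReal_Ioc_incrementMeasure {ι : Type*} {l : Filter ι} {p : ι → ℕ → ℝ}
    (hp : ∀ i k, 0 ≤ p i k) {Z : ℝ → ℝ} {N : ι → ℕ} {t : ℝ} (hN : ∀ i, ∀ k ≥ N i, t < p i k)
    {Q : StieltjesFunction ℝ} (hQ0 : Q 0 = 0)
    (hQ : ∀ s ∈ Icc 0 t, Tendsto (fun i => qvSum (p i) Z s) l (𝓝 (Q s))) {s : ℝ}
    (hs : s ∈ Icc (-1) t) :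
    Tendsto (fun i => (incrementMeasure (p i) Z (N i)).real (Ioc (-1) s)) l
      (𝓝 ((Q.measure.restrict (Ioi 0)).real (Ioc (-1) s))) := by
  simp only [measureReal_Ioc_incrementMeasure Z (fun k => neg_one_lt_zero.trans_le (hp _ k))
      fun k hk => hs.2.trans_lt (hN _ k hk),
    measureReal_restrict_apply measurableSet_Ioc, Ioc_inter_Ioi, measureReal_def, Q.measure_Ioc]
  rw [max_eq_right (by norm_num : (-1 : ℝ) ≤ 0), hQ0, sub_zero]
  rcases lt_or_ge s 0 with hs0 | hs0
  · have hzero : ∀ i, qvSum (p i) Z s = 0 := fun i => by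
      simp [qvSum, fun k => not_le.2 (hs0.trans_le (hp i k))]
    simp only [hzero, ENNReal.ofReal_of_nonpos (hQ0 ▸ Q.mono hs0.le), ENNReal.toReal_zero]
    exact tendsto_const_nhds
  · rw [ENNReal.toReal_ofReal (hQ0 ▸ Q.mono hs0)]
    exact hQ s ⟨hs0, hs.2⟩

theorem stmt15_general (p : ℕ → ℕ → ℝ)
    (hp0 : ∀ n, p n 0 = 0)
    (hmono : ∀ n, StrictMono (p n))
    (htop : ∀ n, Tendsto (p n) atTop atTop)
    (hmesh : ∀ T > (0 : ℝ), ∀ ε > (0 : ℝ), ∀ᶠ n in atTop, ∀ k, p n k ≤ T → p n (k + 1) - p n k < ε)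
    (Z : ℝ → ℝ) (hZ : Continuous Z) (hZpos : ∀ t, 0 < Z t)
    (Q : StieltjesFunction ℝ) (hQ0 : Q 0 = 0)
    (hQ : ∀ t ≥ (0 : ℝ), Tendsto (fun n => qvSum (p n) Z t) atTop (𝓝 (Q t))) :
    ∀ t ≥ (0 : ℝ), Tendsto (fun n => qvSum (p n) (fun s => Real.log (Z s)) t) atTop
      (𝓝 (∫ s in Set.Ioc 0 t, (Z s) ^ (-2 : ℤ) ∂Q.measure)) := by
  intro t ht
  have hpnn : ∀ n k, 0 ≤ p n k := fun n k => hp0 n ▸ (hmono n).monotone k.zero_le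
  have hpos : ∀ n k, -1 < p n k := fun n k => by linarith [hpnn n k]
  choose N hN using fun n => eventually_atTop.1 ((htop n).eventually_gt_atTop t)
  set μ := fun n => incrementMeasure (p n) Z (N n)
  have hg : Continuous fun s => Z s ^ (-2 : ℤ) := hZ.zpow₀ _ fun s => Or.inl (hZpos s).ne'
  have hint := tendsto_setIntegral_Ioc_of_tendsto_measureReal (μs := μ) (by linarith)
    hg.continuousOn fun s hs =>
      tendsto_measureReal_Ioc_incrementMeasure hpnn hN hQ0 (fun s hs => hQ s hs.1) hs
  have hlog : Tendsto (fun n => qvSum (p n) (fun s => log (Z s)) t -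
      ∫ x in Ioc (-1) t, Z x ^ (-2 : ℤ) ∂μ n) atTop (𝓝 0) := by
    refine tendsto_nhds_zero_of_forall_abs_le_mul (hQ t ht) fun ε hε => ?_
    have hmesh' : ∀ δ > 0, ∀ᶠ n in atTop, ∀ k, p n k ≤ t → p n (k + 1) - p n k < δ := fun δ hδ =>
      (hmesh (t + 1) (by linarith) δ hδ).mono fun n hn k hk => hn k (by linarith)
    filter_upwards [eventually_forall_abs_sub_le_of_mesh hpnn (fun n => (hmono n).monotone) hmesh'
      hg.continuousOn hε] with n hn
    rw [setIntegral_Ioc_incrementMeasure _ _ (hpos n)]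
    exact abs_qvSum_log_sub_sum_le hZpos (hN n) hn
  have := hlog.add hint
  rw [Measure.restrict_restrict measurableSet_Ioc, Ioc_inter_Ioi,
    max_eq_right (by norm_num)] at this
  simpa using this

theorem stmt15 (p : ℕ → ℕ → ℝ)
    (hp0 : ∀ n, p n 0 = 0)
    (hmono : ∀ n, StrictMono (p n))
    (htop : ∀ n, Tendsto (p n) atTop atTop)
    (hrefine : ∀ n, Set.range (p n) ⊆ Set.range (p (n + 1)))
    (hmesh : ∀ T > (0 : ℝ), ∀ ε > (0 : ℝ), ∀ᶠ n in atTop, ∀ k, p n k ≤ T → p n (k + 1) - p n k < ε)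
    (Z : ℝ → ℝ) (hZ : Continuous Z) (hZpos : ∀ t, 0 < Z t)
    (Q : StieltjesFunction ℝ) (hQcont : Continuous Q) (hQ0 : Q 0 = 0)
    (hQ : ∀ t ≥ (0 : ℝ), Tendsto (fun n => qvSum (p n) Z t) atTop (𝓝 (Q t))) :
    ∀ t ≥ (0 : ℝ), Tendsto (fun n => qvSum (p n) (fun s => Real.log (Z s)) t) atTop
      (𝓝 (∫ s in Set.Ioc 0 t, (Z s) ^ (-2 : ℤ) ∂Q.measure)) :=
  stmt15_general p hp0 hmono htop hmesh Z hZ hZpos Q hQ0 hQ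
end
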